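/- arXiv:1505.01340 — 3 statements merged into one kernel-verified Lean document; each statement's English description precedes it below -/
import Mathlib

section
/- Let V be a partially computable function with undecidable halting set, and define U(x) = V(φ(x)) where φ(n) is the largest k with 2^(k-1) ∣ n. Then dom(U) is not almost decidable: there is no computable set S of natural density 1 such that S ∩ dom(U) is computable. -/
/-!
A density-one set `S` meets every fibre `φ⁻¹(n + 1) = {2 ^ n * (2 * y + 1)}` of `φ`, because
that fibre has lower density at least `2 ^ -(n + 2)`. If `S` is computable, an unbounded search
through `S` therefore yields a computable `t` with `t n ∈ S` and `φ (t n) = n + 1`, so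
`n + 1 ∈ dom V ↔ t n ∈ S ∩ dom U`: deciding `S ∩ dom U` would decide `dom V`.
-/

open Filter

/-- The counting sequence #({1,...,N} ∩ A)/N used for natural density. -/
noncomputable def densSeq (A : Set ℕ) (N : ℕ) : ℝ :=
  (Nat.card ↥(A ∩ Set.Icc 1 N) : ℝ) / N

/-- `A` has natural density `r`. -/
def HasDensity (A : Set ℕ) (r : ℝ) : Prop :=
  Filter.Tendsto (densSeq A) Filter.atTop (nhds r)

/-- `phi n` is the largest `k` such that `2^(k-1)` divides `n` (for `n ≥ 1`),
i.e. the 2-adic valuation of `n` plus one. -/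
def phi (n : ℕ) : ℕ := padicValNat 2 n + 1

/-- A set of positive integers is almost decidable if some computable set of
natural density one intersects it in a computable set. -/
def AlmostDecidable (S : Set ℕ) : Prop :=
  ∃ R : Set ℕ, ComputablePred (· ∈ R) ∧ HasDensity R 1 ∧
    ComputablePred (fun x => x ∈ R ∧ x ∈ S)

/-- A (Turing) universal partially computable unary function. -/
def Universal (U : ℕ →. ℕ) : Prop :=
  Partrec U ∧ ∃ C : ℕ → ℕ → ℕ, Computable₂ C ∧
    ∀ F : ℕ →. ℕ, Partrec F → ∃ g : ℕ, ∀ x, 1 ≤ x → U (C g x) = F x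

theorem densSeq_add_densSeq_le_one {S T : Set ℕ} (hST : Disjoint S T) (N : ℕ) :
    densSeq S N + densSeq T N ≤ 1 := by
  rcases N.eq_zero_or_pos with rfl | hN
  · simp [densSeq]
  have hcard : Nat.card ↥(S ∩ Set.Icc 1 N) + Nat.card ↥(T ∩ Set.Icc 1 N) ≤ N := by
    have hfin := Set.finite_Icc 1 N
    rw [Nat.card_coe_set_eq, Nat.card_coe_set_eq,
      ← Set.ncard_union_eq (hST.mono Set.inter_subset_left Set.inter_subset_left)
        (hfin.inter_of_right S) (hfin.inter_of_right T), ← Set.union_inter_distrib_right]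
    calc ((S ∪ T) ∩ Set.Icc 1 N).ncard ≤ (Set.Icc 1 N).ncard :=
          Set.ncard_le_ncard Set.inter_subset_right hfin
      _ = N := by simp
  rw [densSeq, densSeq, ← add_div, div_le_one (by positivity)]
  exact_mod_cast hcard

theorem HasDensity.inter_nonempty {S T : Set ℕ} (hS : HasDensity S 1) {c : ℝ} (hc : 0 < c)
    (hT : ∃ᶠ N in atTop, c ≤ densSeq T N) : (S ∩ T).Nonempty := by
  by_contra hdisj
  have hS' : ∀ᶠ N in atTop, 1 - c < densSeq S N :=
    hS.eventually (eventually_gt_nhds (by linarith))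
  obtain ⟨N, hTN, hSN⟩ := (hT.and_eventually hS').exists
  have := densSeq_add_densSeq_le_one
    (Set.disjoint_iff_inter_eq_empty.mpr (Set.not_nonempty_iff_eq_empty.mp hdisj)) N
  linarith

theorem div_two_pow_succ_le_card_two_pow_mul_odd (n N : ℕ) :
    N / 2 ^ (n + 1) ≤ Nat.card ↥(Set.range (fun y => 2 ^ n * (2 * y + 1)) ∩ Set.Icc 1 N) := by
  set f : ℕ → ℕ := fun y => 2 ^ n * (2 * y + 1)
  have hf : f.Injective := fun a b hab => by
    have := Nat.eq_of_mul_eq_mul_left (by positivity) hab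
    omega
  have hsub : f '' Set.Iio (N / 2 ^ (n + 1)) ⊆ Set.range f ∩ Set.Icc 1 N := by
    rintro _ ⟨y, hy, rfl⟩
    refine ⟨⟨y, rfl⟩, Nat.one_le_iff_ne_zero.mpr (by positivity), ?_⟩
    calc f y ≤ 2 ^ (n + 1) * (N / 2 ^ (n + 1)) := by
          simp only [f, pow_succ, Set.mem_Iio] at hy ⊢
          rw [mul_assoc]
          gcongr
          omega
      _ ≤ N := Nat.mul_div_le N _
  calc N / 2 ^ (n + 1) = (f '' Set.Iio (N / 2 ^ (n + 1))).ncard := by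
        rw [Set.ncard_image_of_injective _ hf, Set.ncard_eq_toFinset_card', Set.toFinset_Iio,
          Nat.card_Iio]
    _ ≤ _ := by
        rw [Nat.card_coe_set_eq]
        exact Set.ncard_le_ncard hsub ((Set.finite_Icc 1 N).inter_of_right _)

theorem inv_two_pow_le_densSeq_two_pow_mul_odd (n : ℕ) {N : ℕ} (hN : 2 ^ (n + 1) ≤ N) :
    ((2 : ℝ) ^ (n + 2))⁻¹ ≤ densSeq (Set.range (fun y => 2 ^ n * (2 * y + 1))) N := by
  have hK := div_two_pow_succ_le_card_two_pow_mul_odd n N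
  -- `N < 2 ^ (n + 1) * (K + 1) ≤ 2 ^ (n + 2) * K` once `K = N / 2 ^ (n + 1) ≥ 1`
  have hNK : N ≤ 2 ^ (n + 2) * (N / 2 ^ (n + 1)) := by
    have := Nat.lt_mul_div_succ N (show 0 < 2 ^ (n + 1) by positivity)
    have := (Nat.one_le_div_iff (by positivity)).mpr hN
    rw [pow_succ 2 (n + 1)]
    nlinarith
  have hN0 : (0 : ℝ) < N := by exact_mod_cast (Nat.two_pow_pos _).trans_le hN
  rw [densSeq, inv_le_iff_one_le_mul₀ (by positivity), div_mul_eq_mul_div, le_div_iff₀ hN0,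
    one_mul]
  calc (N : ℝ) ≤ (N / 2 ^ (n + 1) : ℕ) * 2 ^ (n + 2) := by rw [mul_comm]; exact_mod_cast hNK
    _ ≤ _ := by gcongr

theorem HasDensity.exists_two_pow_mul_odd_mem {S : Set ℕ} (hS : HasDensity S 1) (n : ℕ) :
    ∃ y, 2 ^ n * (2 * y + 1) ∈ S := by
  obtain ⟨_, hxS, y, rfl⟩ := hS.inter_nonempty (by positivity)
    (eventually_atTop.mpr ⟨_, fun N => inv_two_pow_le_densSeq_two_pow_mul_odd n⟩).frequently
  exact ⟨y, hxS⟩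

theorem phi_two_pow_mul_odd (n y : ℕ) : phi (2 ^ n * (2 * y + 1)) = n + 1 := by
  have : Fact (Nat.Prime 2) := ⟨Nat.prime_two⟩
  rw [phi, padicValNat.mul (by positivity) (by omega), padicValNat.prime_pow,
    padicValNat.eq_zero_of_not_dvd (by omega), add_zero]

theorem Primrec.nat_pow : Primrec₂ ((· ^ ·) : ℕ → ℕ → ℕ) :=
  Primrec₂.unpaired'.1 Nat.Primrec.pow

theorem primrec₂_two_pow_mul_odd : Primrec₂ fun n y : ℕ => 2 ^ n * (2 * y + 1) :=
  Primrec.nat_mul.comp (Primrec.nat_pow.comp (Primrec.const 2) Primrec.fst)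
    (Primrec.nat_add.comp (Primrec.nat_mul.comp (Primrec.const 2) Primrec.snd) (Primrec.const 1))

theorem exists_computable_phi_eq_succ_mem {S : Set ℕ} (hS : ComputablePred (· ∈ S))
    (hex : ∀ n, ∃ y, 2 ^ n * (2 * y + 1) ∈ S) :
    ∃ t : ℕ → ℕ, Computable t ∧ ∀ n, t n ∈ S ∧ phi (t n) = n + 1 := by
  classical
  have hsearch : ComputablePred fun p : ℕ × ℕ => 2 ^ p.1 * (2 * p.2 + 1) ∈ S :=
    ComputablePred.computable_of_manyOneReducible
      (ManyOneReducible.mk _ primrec₂_two_pow_mul_odd.to_comp) hS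
  exact ⟨fun n => 2 ^ n * (2 * Nat.find (hex n) + 1),
    primrec₂_two_pow_mul_odd.to_comp.comp Computable.id (Computable.find hsearch hex),
    fun n => ⟨Nat.find_spec (hex n), phi_two_pow_mul_odd n _⟩⟩

theorem ComputablePred.of_succ {p : ℕ → Prop} (hp : ComputablePred fun n => p (n + 1)) :
    ComputablePred p := by
  classical
  obtain ⟨f, hf, hpf⟩ := ComputablePred.computable_iff.mp hp
  refine ComputablePred.computable_iff.mpr
    ⟨fun n => Nat.casesOn n (decide (p 0)) f, ?_, funext fun n => ?_⟩
  · exact Computable.nat_casesOn Computable.id (Computable.const _) (hf.comp Computable.snd).to₂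
  · cases n with
    | zero => simp
    | succ m => simpa using congrFun hpf m

theorem stmt_9_general (V : ℕ →. ℕ)
    (hund : ¬ ComputablePred (fun n : ℕ => (V n).Dom))
    (U : ℕ →. ℕ) (hU : ∀ x : ℕ, U x = V (phi x)) :
    ¬ ∃ S : Set ℕ, ComputablePred (· ∈ S) ∧ HasDensity S 1 ∧
        ComputablePred (fun x : ℕ => x ∈ S ∧ (U x).Dom) := by
  rintro ⟨S, hS, hdens, hSU⟩
  obtain ⟨t, ht, htS⟩ := exists_computable_phi_eq_succ_mem hS hdens.exists_two_pow_mul_odd_mem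
  have hred : (fun n => (V (n + 1)).Dom) ≤₀ fun x => x ∈ S ∧ (U x).Dom :=
    ⟨t, ht, fun n => by simp only [hU, (htS n).2, (htS n).1, true_and]⟩
  exact hund (ComputablePred.computable_of_manyOneReducible hred hSU).of_succ

theorem stmt_9 (V : ℕ →. ℕ) (hV : Partrec V)
    (hund : ¬ ComputablePred (fun n : ℕ => (V n).Dom))
    (U : ℕ →. ℕ) (hU : ∀ x : ℕ, U x = V (phi x)) :
    ¬ ∃ S : Set ℕ, ComputablePred (· ∈ S) ∧ HasDensity S 1 ∧
        ComputablePred (fun x : ℕ => x ∈ S ∧ (U x).Dom) :=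
  stmt_9_general V hund U hU
end

section
/- If U(x) = V(φ(x)) where V is partially computable with undecidable domain and φ(n) is the largest k with 2^(k-1) ∣ n, then dom(U) has positive lower density (in particular, dom(U) is not negligible). -/
open Filter

/-!
The set `{x | padicValNat 2 x = k}` has density `2^-(k+1)` and `phi` maps it to `k + 1`.
Since `dom V` is undecidable it is not contained in `{0}`, so it contains some `k + 1`, and
`dom U` contains the whole valuation class `phi⁻¹(k + 1)`; the lower bound
`⌊N / 2^(k+1)⌋ / N ≥ 1 / 2^(k+2)` on its counting sequence keeps the liminf positive.
-/

open Finset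

theorem ComputablePred.of_imp_eq {α : Type*} [Primcodable α] [DecidableEq α] {p : α → Prop}
    (a : α) (h : ∀ x, p x → x = a) : ComputablePred p := by
  by_cases ha : p a
  · exact (Primrec.eq.comp Primrec.id (Primrec.const a)).computablePred.of_eq
      fun x => ⟨by rintro rfl; exact ha, h x⟩
  · exact (Computable.const false).computablePred.of_eq
      fun x => ⟨by simp, fun hx => ha (h x hx ▸ hx)⟩

theorem div_pow_succ_le_card_padicValNat_eq (p : ℕ) [hp : Fact p.Prime] (k N : ℕ) :
    N / p ^ (k + 1) ≤ #{x ∈ Icc 1 N | padicValNat p x = k} := by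
  have hp1 : 1 < p := hp.out.one_lt
  rw [← card_range (N / p ^ (k + 1))]
  refine card_le_card_of_injOn (fun j => p ^ k * (p * j + 1)) (fun j hj => ?_) ?_
  · simp only [coe_range, Set.mem_Iio] at hj
    have hpj : ¬ p ∣ p * j + 1 := by
      rw [Nat.dvd_add_right (dvd_mul_right p j)]; exact hp.out.not_dvd_one
    have hle : p ^ k * (p * j + 1) ≤ N :=
      calc p ^ k * (p * j + 1) ≤ p ^ k * (p * (N / p ^ (k + 1))) := by gcongr; nlinarith
        _ = N / p ^ (k + 1) * p ^ (k + 1) := by ring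
        _ ≤ N := Nat.div_mul_le_self _ _
    simp only [coe_filter, mem_Icc, Set.mem_ofPred_eq]
    refine ⟨⟨Nat.one_le_iff_ne_zero.2 (by positivity), hle⟩, ?_⟩
    rw [padicValNat.mul (by positivity) (by omega), padicValNat.prime_pow,
      padicValNat.eq_zero_of_not_dvd hpj, add_zero]
  · intro i _ j _ hij
    have := Nat.eq_of_mul_eq_mul_left (by positivity) hij
    simpa [hp.out.pos.ne'] using this

theorem div_two_mul_le_cast_div {q N : ℕ} (hq : q ≤ N) : (N : ℝ) / (2 * q) ≤ (N / q : ℕ) := by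
  rcases Nat.eq_zero_or_pos q with rfl | hq0
  · simp
  have hlt : (N : ℝ) < (N / q : ℕ) * q + q := by exact_mod_cast Nat.lt_div_mul_add hq0
  have hone : (1 : ℝ) ≤ (N / q : ℕ) := by exact_mod_cast (Nat.one_le_div_iff hq0).2 hq
  rw [div_le_iff₀ (by positivity)]
  nlinarith

theorem densSeq_mono {A B : Set ℕ} (h : A ⊆ B) (N : ℕ) : densSeq A N ≤ densSeq B N := by
  unfold densSeq
  gcongr
  exact Nat.card_mono (Set.finite_Icc 1 N |>.inter_of_right B) (Set.inter_subset_inter_left _ h)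

theorem densSeq_le_one (A : Set ℕ) (N : ℕ) : densSeq A N ≤ 1 := by
  have hcard : Nat.card ↥(A ∩ Set.Icc 1 N) ≤ N := by
    calc Nat.card ↥(A ∩ Set.Icc 1 N) ≤ Nat.card ↥(Set.Icc 1 N) :=
          Nat.card_mono (Set.finite_Icc 1 N) Set.inter_subset_right
      _ = N := by simp
  exact div_le_one_of_le₀ (by exact_mod_cast hcard) N.cast_nonneg

theorem card_div_le_densSeq {A : Set ℕ} {N : ℕ} {s : Finset ℕ} (hsA : ↑s ⊆ A)
    (hsN : s ⊆ Icc 1 N) : (#s : ℝ) / N ≤ densSeq A N := by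
  unfold densSeq
  gcongr
  rw [Nat.card_coe_set_eq, ← Set.ncard_coe_finset]
  exact Set.ncard_le_ncard (Set.subset_inter hsA (by simpa using coe_subset.2 hsN))
    (Set.finite_Icc 1 N |>.inter_of_right A)

theorem le_liminf_densSeq {A : Set ℕ} {c : ℝ} (h : ∀ᶠ N in atTop, c ≤ densSeq A N) :
    c ≤ liminf (densSeq A) atTop :=
  le_liminf_of_le (isBoundedUnder_of ⟨1, densSeq_le_one A⟩).isCoboundedUnder_ge h

theorem inv_le_densSeq_padicValNat_eq (p : ℕ) [hp : Fact p.Prime] {k N : ℕ}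
    (hN : p ^ (k + 1) ≤ N) : (2 * p ^ (k + 1) : ℝ)⁻¹ ≤ densSeq {x | padicValNat p x = k} N := by
  have hp0 : 0 < p := hp.out.pos
  have hN0 : (0 : ℝ) < N := by exact_mod_cast lt_of_lt_of_le (by positivity) hN
  calc (2 * p ^ (k + 1) : ℝ)⁻¹ = N / (2 * (p ^ (k + 1) : ℕ) : ℝ) / N := by
        field_simp; push_cast; ring
    _ ≤ (N / p ^ (k + 1) : ℕ) / N := by gcongr; exact div_two_mul_le_cast_div hN
    _ ≤ #{x ∈ Icc 1 N | padicValNat p x = k} / N := by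
        gcongr; exact div_pow_succ_le_card_padicValNat_eq p k N
    _ ≤ _ := card_div_le_densSeq (by simp [Set.subset_def]) (filter_subset _ _)

theorem stmt_11_general (V : ℕ →. ℕ)
    (hund : ¬ ComputablePred (fun n : ℕ => (V n).Dom))
    (U : ℕ →. ℕ) (hU : ∀ x : ℕ, U x = V (phi x)) :
    0 < Filter.liminf (densSeq {x : ℕ | (U x).Dom}) Filter.atTop ∧
    ¬ HasDensity {x : ℕ | (U x).Dom} 0 := by
  obtain ⟨k, hdom⟩ : ∃ k, (V (k + 1)).Dom := by
    by_contra! h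
    refine hund (ComputablePred.of_imp_eq 0 fun n hn => ?_)
    obtain _ | k := n
    · rfl
    · exact absurd hn (h k)
  have hsub : {x | padicValNat 2 x = k} ⊆ {x | (U x).Dom} := by
    intro x hx
    rwa [Set.mem_ofPred_eq, hU, phi, hx]
  have : Fact (Nat.Prime 2) := ⟨Nat.prime_two⟩
  have hpos : 0 < liminf (densSeq {x | (U x).Dom}) atTop := by
    refine lt_of_lt_of_le (by positivity) (le_liminf_densSeq (c := (2 * 2 ^ (k + 1))⁻¹) ?_)
    filter_upwards [eventually_ge_atTop (2 ^ (k + 1))] with N hN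
    exact (inv_le_densSeq_padicValNat_eq 2 hN).trans (densSeq_mono hsub N)
  exact ⟨hpos, fun h => (h.liminf_eq ▸ hpos).false⟩

theorem stmt_11 (V : ℕ →. ℕ) (hV : Partrec V)
    (hund : ¬ ComputablePred (fun n : ℕ => (V n).Dom))
    (U : ℕ →. ℕ) (hU : ∀ x : ℕ, U x = V (phi x)) :
    0 < Filter.liminf (densSeq {x : ℕ | (U x).Dom}) Filter.atTop ∧
    ¬ HasDensity {x : ℕ | (U x).Dom} 0 :=
  stmt_11_general V hund U hU
end

section
/- There exist sets of positive integers that are almost decidable but not decidable; in fact, there are infinitely many such sets. Concretely, if H is any undecidable computably enumerable set and P = {y² : y ∈ ℤ⁺}, then the set {y² : y ∈ H} is almost decidable (via the generic computable set of non-squares) but not decidable. -/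
open Filter

/-!
Up to `N` there are only `⌊√N⌋` positive squares, so the positive non-squares form a computable
set of density one; it is disjoint from the set of squares of any `H`, which is therefore almost
decidable. Since `y ↦ y * y` is a computable injection, `H` is decidable as soon as its set of
squares is. Toggling a single point preserves both almost decidability and undecidability, so
starting from the squares of the halting set, the sets `S ∆ {a}` are infinitely many examples.
-/

open Filter Topology
open scoped symmDiff

namespace ComputablePred

variable {α β : Type*} [Primcodable α] [Primcodable β]

theorem comp {p : β → Prop} {f : α → β} (hp : ComputablePred p) (hf : Computable f) :
    ComputablePred fun a => p (f a) := by
  obtain ⟨g, hg, rfl⟩ := computable_iff.1 hp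
  exact computable_iff.2 ⟨g ∘ f, hg.comp hf, rfl⟩

theorem const (P : Prop) : ComputablePred fun _ : α => P := by
  classical
  exact (Computable.const (decide P)).computablePred

theorem eq_const (a : α) : ComputablePred (· = a) := by
  classical
  exact (Primrec.eq.comp Primrec.id (Primrec.const a)).computablePred

theorem and {p q : α → Prop} (hp : ComputablePred p) (hq : ComputablePred q) :
    ComputablePred fun a => p a ∧ q a := by
  obtain ⟨f, hf, rfl⟩ := computable_iff.1 hp
  obtain ⟨g, hg, rfl⟩ := computable_iff.1 hq
  exact computable_iff.2 ⟨fun a => f a && g a, Primrec.and.to_comp.comp hf hg, by simp⟩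

theorem or {p q : α → Prop} (hp : ComputablePred p) (hq : ComputablePred q) :
    ComputablePred fun a => p a ∨ q a := by
  obtain ⟨f, hf, rfl⟩ := computable_iff.1 hp
  obtain ⟨g, hg, rfl⟩ := computable_iff.1 hq
  exact computable_iff.2 ⟨fun a => f a || g a, Primrec.or.to_comp.comp hf hg, by simp⟩

theorem of_image {s : Set α} {f : α → β} (hs : ComputablePred (· ∈ f '' s))
    (hf : Computable f) (hinj : Function.Injective f) : ComputablePred (· ∈ s) :=
  (hs.comp hf).of_eq fun _ => hinj.mem_set_image

theorem mem_symmDiff_singleton {s : Set α} (hs : ComputablePred (· ∈ s)) (a : α) :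
    ComputablePred (· ∈ s ∆ {a}) :=
  ((hs.and (eq_const a).not).or ((eq_const a).and hs.not)).of_eq fun _ => by
    simp [Set.mem_symmDiff]

end ComputablePred

theorem computablePred_mem_symmDiff_singleton_iff {α : Type*} [Primcodable α] {s : Set α}
    (a : α) : ComputablePred (· ∈ s ∆ {a}) ↔ ComputablePred (· ∈ s) :=
  ⟨fun h => symmDiff_symmDiff_cancel_right {a} s ▸ h.mem_symmDiff_singleton a,
    fun h => h.mem_symmDiff_singleton a⟩

theorem AlmostDecidable.symmDiff_singleton {S : Set ℕ} (hS : AlmostDecidable S) (a : ℕ) :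
    AlmostDecidable (S ∆ {a}) := by
  obtain ⟨R, hR, hRdens, hRS⟩ := hS
  have hRS' : ComputablePred (· ∈ {x | x ∈ R ∧ x ∈ S}) := hRS
  refine ⟨R, hR, hRdens, (hR.and (hRS'.mem_symmDiff_singleton a)).of_eq fun x => ?_⟩
  simp only [Set.mem_symmDiff, Set.mem_ofPred_eq, Set.mem_singleton_iff]
  tauto

theorem exists_pos_mul_self_iff (x : ℕ) :
    (∃ y, 1 ≤ y ∧ y * y = x) ↔ 0 < x ∧ Nat.sqrt x * Nat.sqrt x = x := by
  rw [← Nat.exists_mul_self]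
  constructor
  · rintro ⟨y, hy, rfl⟩
    exact ⟨Nat.mul_pos hy hy, y, rfl⟩
  · rintro ⟨hx, y, rfl⟩
    exact ⟨y, Nat.pos_of_mul_pos_left hx, rfl⟩

theorem computablePred_exists_pos_mul_self :
    ComputablePred fun x : ℕ => ∃ y, 1 ≤ y ∧ y * y = x := by
  have : PrimrecPred fun x : ℕ => 0 < x ∧ Nat.sqrt x * Nat.sqrt x = x :=
    (Primrec.nat_lt.comp (Primrec.const 0) Primrec.id).and
      (Primrec.eq.comp (Primrec.nat_mul.comp Primrec.nat_sqrt Primrec.nat_sqrt) Primrec.id)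
  exact this.computablePred.of_eq fun x => (exists_pos_mul_self_iff x).symm

theorem nonsquares_inter_Icc (N : ℕ) :
    {x : ℕ | 1 ≤ x ∧ ¬∃ y, 1 ≤ y ∧ y * y = x} ∩ Set.Icc 1 N =
      Set.Icc 1 N \ (fun y => y * y) '' Set.Icc 1 (Nat.sqrt N) := by
  ext x
  simp only [Set.mem_inter_iff, Set.mem_sdiff, Set.mem_Icc, Set.mem_image, Nat.le_sqrt]
  constructor
  · rintro ⟨⟨-, hsq⟩, hx⟩
    exact ⟨hx, fun ⟨y, ⟨hy, _⟩, hyx⟩ => hsq ⟨y, hy, hyx⟩⟩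
  · rintro ⟨hx, hsq⟩
    exact ⟨⟨hx.1, fun ⟨y, hy, hyx⟩ => hsq ⟨y, ⟨hy, hyx ▸ hx.2⟩, hyx⟩⟩, hx⟩

theorem ncard_nonsquares_inter_Icc (N : ℕ) :
    ({x : ℕ | 1 ≤ x ∧ ¬∃ y, 1 ≤ y ∧ y * y = x} ∩ Set.Icc 1 N).ncard = N - Nat.sqrt N := by
  have hsq : (fun y => y * y) '' Set.Icc 1 (Nat.sqrt N) ⊆ Set.Icc 1 N := by
    rintro _ ⟨y, hy, rfl⟩
    exact ⟨Nat.mul_pos hy.1 hy.1, Nat.le_sqrt.1 hy.2⟩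
  rw [nonsquares_inter_Icc, Set.ncard_sdiff hsq,
    Set.ncard_image_of_injective _ fun _ _ => Nat.mul_self_inj.1, Set.ncard_Icc_nat,
    Set.ncard_Icc_nat]
  omega

theorem tendsto_natSqrt_div_self_atTop :
    Tendsto (fun N : ℕ => (Nat.sqrt N : ℝ) / N) atTop (𝓝 0) := by
  have hsqrt : Tendsto (fun N : ℕ => (Nat.sqrt N : ℝ)) atTop atTop :=
    tendsto_natCast_atTop_atTop.comp
      (tendsto_atTop_atTop.2 fun b => ⟨b * b, fun _ h => Nat.le_sqrt.2 h⟩)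
  refine squeeze_zero (fun _ => by positivity) (fun N => ?_) hsqrt.inv_tendsto_atTop
  rcases (Nat.sqrt N).eq_zero_or_pos with h0 | hs
  · simp [h0]
  have hN : (0 : ℝ) < N := by exact_mod_cast hs.trans_le (Nat.sqrt_le_self N)
  rw [Pi.inv_apply, div_le_iff₀ hN, inv_mul_eq_div, le_div_iff₀ (by exact_mod_cast hs)]
  exact_mod_cast Nat.sqrt_le N

theorem hasDensity_nonsquares :
    HasDensity {x : ℕ | 1 ≤ x ∧ ¬∃ y, 1 ≤ y ∧ y * y = x} 1 := by
  have h : Tendsto (fun N : ℕ => 1 - (Nat.sqrt N : ℝ) / N) atTop (𝓝 1) := by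
    simpa using tendsto_const_nhds.sub tendsto_natSqrt_div_self_atTop
  refine h.congr' ?_
  filter_upwards [eventually_ge_atTop 1] with N hN
  rw [densSeq, Nat.card_coe_set_eq, ncard_nonsquares_inter_Icc,
    Nat.cast_sub (Nat.sqrt_le_self N), sub_div, div_self (by positivity)]

theorem computablePred_mem_nonsquares :
    ComputablePred (· ∈ {x : ℕ | 1 ≤ x ∧ ¬∃ y, 1 ≤ y ∧ y * y = x}) :=
  (Primrec.nat_le.comp (Primrec.const 1) Primrec.id).computablePred.and
    computablePred_exists_pos_mul_self.not

theorem almostDecidable_image_mul_self (H : Set ℕ) : AlmostDecidable ((fun y => y * y) '' H) := by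
  refine ⟨_, computablePred_mem_nonsquares, hasDensity_nonsquares,
    (ComputablePred.const False).of_eq fun x => ⟨False.elim, ?_⟩⟩
  rintro ⟨⟨hx, hsq⟩, y, -, rfl⟩
  exact hsq ⟨y, Nat.pos_of_mul_pos_left hx, rfl⟩

theorem computablePred_not_pos_square_and_mem_image_mul_self (H : Set ℕ) :
    ComputablePred fun x : ℕ => (¬∃ y, 1 ≤ y ∧ y * y = x) ∧ x ∈ (fun y => y * y) '' H := by
  -- `0 = 0 * 0` is the only square that is not a positive square
  refine ((ComputablePred.eq_const 0).and (ComputablePred.const (0 ∈ H))).of_eq fun x => ?_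
  constructor
  · rintro ⟨rfl, h0⟩
    exact ⟨fun ⟨y, hy, hy0⟩ => (Nat.mul_pos hy hy).ne' hy0, 0, h0, rfl⟩
  · rintro ⟨hsq, y, hy, rfl⟩
    obtain rfl : y = 0 := by_contra fun h => hsq ⟨y, Nat.pos_of_ne_zero h, rfl⟩
    exact ⟨rfl, hy⟩

theorem not_computablePred_image_mul_self {H : Set ℕ} (hH : ¬ComputablePred (· ∈ H)) :
    ¬ComputablePred (· ∈ (fun y => y * y) '' H) := fun h =>
  hH <| h.of_image (Primrec.nat_mul.comp Primrec.id Primrec.id).to_comp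
    fun _ _ => Nat.mul_self_inj.1

theorem exists_not_computablePred_nat : ∃ H : Set ℕ, ¬ComputablePred (· ∈ H) := by
  open Nat.Partrec in
  refine ⟨{n | (Code.eval (Denumerable.ofNat Code n) 0).Dom}, fun h => ?_⟩
  exact ComputablePred.halting_problem 0 <| (h.comp Computable.encode).of_eq fun c => by simp

theorem infinite_setOf_almostDecidable_not_computablePred :
    {S : Set ℕ | AlmostDecidable S ∧ ¬ComputablePred (· ∈ S)}.Infinite := by
  obtain ⟨H, hH⟩ := exists_not_computablePred_nat
  set S := (fun y => y * y) '' H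
  refine Set.infinite_of_injective_forall_mem (f := fun a : ℕ => S ∆ {a})
    ((symmDiff_right_injective S).comp Set.singleton_injective) fun a => ?_
  exact ⟨(almostDecidable_image_mul_self H).symmDiff_singleton a,
    (computablePred_mem_symmDiff_singleton_iff a).not.2 (not_computablePred_image_mul_self hH)⟩

theorem stmt_19 :
    {S : Set ℕ | AlmostDecidable S ∧ ¬ ComputablePred (· ∈ S)}.Infinite ∧
    ∀ H : Set ℕ,
      (∃ F : ℕ →. ℕ, Partrec F ∧ H = {n : ℕ | (F n).Dom}) →
      ¬ ComputablePred (· ∈ H) →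
      (ComputablePred (fun x : ℕ => ¬ ∃ y : ℕ, 1 ≤ y ∧ y * y = x) ∧
       HasDensity {x : ℕ | 1 ≤ x ∧ ¬ ∃ y : ℕ, 1 ≤ y ∧ y * y = x} 1 ∧
       ComputablePred (fun x : ℕ =>
         (¬ ∃ y : ℕ, 1 ≤ y ∧ y * y = x) ∧ x ∈ {z : ℕ | ∃ y ∈ H, y * y = z}) ∧
       AlmostDecidable {z : ℕ | ∃ y ∈ H, y * y = z} ∧
       ¬ ComputablePred (· ∈ {z : ℕ | ∃ y ∈ H, y * y = z})) :=
  ⟨infinite_setOf_almostDecidable_not_computablePred, fun H _ hH =>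
    ⟨computablePred_exists_pos_mul_self.not, hasDensity_nonsquares,
      computablePred_not_pos_square_and_mem_image_mul_self H,
      almostDecidable_image_mul_self H, not_computablePred_image_mul_self hH⟩⟩
end
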